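/- arXiv:2512.24807 — 4 statements merged into one kernel-verified Lean document; each statement's English description precedes it below -/
import Mathlib

section
/- Let q ∈ [0,d] and suppose that ∂D satisfies the Aikawa condition with exponent q. Then there exists a constant C > 0 such that m_d({y ∈ B(x,r) ∩ closure(D) : δ_D(y) < s}) ≤ C s^q (max(s,r))^{d−q} for all x ∈ closure(D) and all r, s > 0. -/
open MeasureTheory Metric Set ENNReal Filter

noncomputable def deltaD {d : ℕ} (D : Set (EuclideanSpace ℝ (Fin d)))
    (x : EuclideanSpace ℝ (Fin d)) : ℝ :=
  Metric.infDist x (frontier D)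

def Aikawa {d : ℕ} (D : Set (EuclideanSpace ℝ (Fin d))) (q : ℝ) : Prop :=
  ∃ C₀ : ℝ, 1 ≤ C₀ ∧ ∀ x ∈ frontier D, ∀ r s : ℝ, 0 < s → s ≤ r →
    ENNReal.ofReal r < EMetric.diam (frontier D) →
    MeasureTheory.volume {y : EuclideanSpace ℝ (Fin d) |
        y ∈ Metric.ball x r ∧ Metric.infDist y (frontier D) < s} ≤
      ENNReal.ofReal (C₀ * (s / r) ^ q) * MeasureTheory.volume (Metric.ball x r)

noncomputable def truncMin (A : ℝ≥0∞) (r : ℝ) : ℝ := (min (ENNReal.ofReal r) A).toReal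

private lemma keyIneq {q dd s R M : ℝ} (hs : 0 < s) (hsR : s ≤ R) (hRM : R ≤ M)
    (hqd : q ≤ dd) :
    (s / R) ^ q * R ^ dd ≤ s ^ q * M ^ (dd - q) := by
  have hR : 0 < R := hs.trans_le hsR
  have h1 : (s / R) ^ q * R ^ dd = s ^ q * R ^ (dd - q) := by
    rw [Real.div_rpow hs.le hR.le, Real.rpow_sub hR]
    ring
  rw [h1]
  exact mul_le_mul_of_nonneg_left
    (Real.rpow_le_rpow hR.le hRM (by linarith)) (Real.rpow_nonneg hs.le q)

theorem stmt0 {d : ℕ} (hd : 1 ≤ d) (D : Set (EuclideanSpace ℝ (Fin d)))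
    (hDopen : IsOpen D) (hDne : D.Nonempty) (hfr : (frontier D).Nonempty)
    (q : ℝ) (hq0 : 0 ≤ q) (hqd : q ≤ (d : ℝ)) (hAik : Aikawa D q) :
    ∃ C : ℝ, 0 < C ∧ ∀ x ∈ closure D, ∀ r s : ℝ, 0 < r → 0 < s →
      MeasureTheory.volume {y : EuclideanSpace ℝ (Fin d) |
          y ∈ Metric.ball x r ∩ closure D ∧ deltaD D y < s} ≤
        ENNReal.ofReal (C * s ^ q * (max s r) ^ ((d : ℝ) - q)) := by
  classical
  obtain ⟨C₀, hC₀1, hA⟩ := hAik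
  have hC₀0 : (0:ℝ) < C₀ := lt_of_lt_of_le one_pos hC₀1
  set F : Set (EuclideanSpace ℝ (Fin d)) := frontier D with hFdef
  have hFne : F.Nonempty := hfr
  set ρ : ℝ≥0∞ := EMetric.diam F with hρdef
  have hdpos : 0 < Module.finrank ℝ (EuclideanSpace ℝ (Fin d)) := by
    rw [finrank_euclideanSpace_fin]; exact hd
  haveI : Nontrivial (EuclideanSpace ℝ (Fin d)) :=
    Module.nontrivial_of_finrank_pos hdpos
  have hc0 : (0:ℝ≥0∞) < volume (ball (0 : EuclideanSpace ℝ (Fin d)) 1) :=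
    measure_ball_pos _ _ one_pos
  have hcTop : volume (ball (0 : EuclideanSpace ℝ (Fin d)) 1) ≠ ⊤ :=
    measure_ball_lt_top.ne
  set c : ℝ := (volume (ball (0 : EuclideanSpace ℝ (Fin d)) 1)).toReal with hcdef
  have hcpos : 0 < c := ENNReal.toReal_pos hc0.ne' hcTop
  have hball : ∀ (z : EuclideanSpace ℝ (Fin d)) (R : ℝ), 0 ≤ R →
      volume (ball z R) ≤ ENNReal.ofReal (c * R ^ (d:ℝ)) := by
    intro z R hR
    have h1 : volume (ball z R) = ENNReal.ofReal (R ^ d * c) := by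
      rw [Measure.addHaar_ball volume z hR, finrank_euclideanSpace_fin,
        ← ENNReal.ofReal_toReal hcTop, ← ENNReal.ofReal_mul (by positivity)]
    rw [h1]
    apply ENNReal.ofReal_le_ofReal
    rw [← Real.rpow_natCast R d, mul_comm]
  -- finite cover of the frontier when it is bounded
  obtain ⟨t, htF, htcov⟩ : ∃ t : Finset (EuclideanSpace ℝ (Fin d)),
      (∀ z ∈ t, z ∈ F) ∧ (0 < ρ.toReal → F ⊆ ⋃ z ∈ t, ball z (ρ.toReal / 8)) := by
    by_cases hρ0 : 0 < ρ.toReal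
    · have hρtop : ρ ≠ ⊤ := by
        intro h; rw [h] at hρ0; simp at hρ0
      have hbdd : Bornology.IsBounded F := Metric.isBounded_iff_ediam_ne_top.mpr hρtop
      have hcomp : IsCompact F := Metric.isCompact_of_isClosed_isBounded isClosed_frontier hbdd
      have hcov0 : F ⊆ ⋃ z ∈ F, ball z (ρ.toReal / 8) := by
        intro z hz
        exact Set.mem_biUnion hz (mem_ball_self (by linarith))
      obtain ⟨b, hbF, hbfin, hbcov⟩ := hcomp.elim_finite_subcover_image
        (fun z _ => isOpen_ball) hcov0
      refine ⟨hbfin.toFinset, fun z hz => hbF (hbfin.mem_toFinset.mp hz), fun _ => ?_⟩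
      intro y hy
      have := hbcov hy
      simpa [Set.Finite.mem_toFinset] using this
    · exact ⟨∅, by simp, fun h => absurd h hρ0⟩
  set N : ℕ := t.card with hNdef
  have hN0 : (0:ℝ) ≤ (N:ℝ) := Nat.cast_nonneg N
  have h9 : (1:ℝ) ≤ 9 ^ (d:ℝ) := Real.one_le_rpow (by norm_num) (Nat.cast_nonneg d)
  have hNC : (1:ℝ) ≤ C₀ * ((N:ℝ) + 1) + 1 := by nlinarith
  set C : ℝ := c * (C₀ * ((N:ℝ) + 1) + 1) * 9 ^ (d:ℝ) with hCdef
  have hCpos : 0 < C := by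
    apply _root_.mul_pos (_root_.mul_pos hcpos (by linarith)) (by positivity)
  refine ⟨C, hCpos, ?_⟩
  intro x hx r s hr hs
  set T : Set (EuclideanSpace ℝ (Fin d)) :=
    {y | y ∈ ball x r ∩ closure D ∧ deltaD D y < s} with hTdef
  have hTδ : ∀ y ∈ T, Metric.infDist y F < s := fun y hy => hy.2
  rcases le_or_gt r s with hrs | hsr
  · -- easy case : r ≤ s
    have hmax : max s r = s := max_eq_left hrs
    rw [hmax]
    have hsub : T ⊆ ball x r := fun y hy => hy.1.1
    refine le_trans (measure_mono hsub)
      (le_trans (hball x r hr.le) (ENNReal.ofReal_le_ofReal ?_))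
    have h1 : r ^ (d:ℝ) ≤ s ^ (d:ℝ) := Real.rpow_le_rpow hr.le hrs (Nat.cast_nonneg d)
    have h2 : s ^ (d:ℝ) = s ^ q * s ^ ((d:ℝ) - q) := by
      rw [← Real.rpow_add hs]; congr 1; ring
    have h3 : (0:ℝ) ≤ s ^ q * s ^ ((d:ℝ) - q) :=
      mul_nonneg (Real.rpow_nonneg hs.le _) (Real.rpow_nonneg hs.le _)
    have hcC : c ≤ C := by
      have := mul_le_mul (mul_le_mul le_rfl hNC zero_le_one hcpos.le) h9 zero_le_one
        (mul_nonneg hcpos.le (by linarith))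
      simpa [hCdef] using this
    calc c * r ^ (d:ℝ) ≤ c * (s ^ q * s ^ ((d:ℝ) - q)) := by
          rw [← h2]; exact mul_le_mul_of_nonneg_left h1 hcpos.le
      _ ≤ C * (s ^ q * s ^ ((d:ℝ) - q)) := mul_le_mul_of_nonneg_right hcC h3
      _ = C * s ^ q * s ^ ((d:ℝ) - q) := by ring
  · -- main case : s < r
    have hmax : max s r = r := max_eq_right hsr.le
    rw [hmax]
    have hsq : (0:ℝ) ≤ s ^ q := Real.rpow_nonneg hs.le q
    have hrdq : (0:ℝ) ≤ r ^ ((d:ℝ) - q) := Real.rpow_nonneg hr.le _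
    by_cases hdiam : ENNReal.ofReal (3 * r) < ρ
    · -- the Aikawa condition applies directly at scale 3r
      rcases Set.eq_empty_or_nonempty T with hT | ⟨y₀, hy₀⟩
      · rw [hT]; simp
      obtain ⟨z, hzF, hz⟩ := (Metric.infDist_lt_iff hFne).mp (hTδ y₀ hy₀)
      have hsub : T ⊆ {y | y ∈ ball z (3 * r) ∧ Metric.infDist y F < s} := by
        intro y hy
        refine ⟨?_, hTδ y hy⟩
        have h1 : dist y x < r := mem_ball.mp hy.1.1
        have h2 : dist y₀ x < r := mem_ball.mp hy₀.1.1
        have h4 := dist_triangle4 y x y₀ z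
        have h5 := dist_comm x y₀
        rw [mem_ball]
        rw [dist_comm y₀ x] at h2
        linarith
      have hAik := hA z hzF (3 * r) s hs (by linarith) hdiam
      refine le_trans (measure_mono hsub) (le_trans hAik ?_)
      have hb := hball z (3 * r) (by linarith)
      have hnn : (0:ℝ) ≤ C₀ * (s / (3 * r)) ^ q :=
        mul_nonneg hC₀0.le (Real.rpow_nonneg (by positivity) q)
      calc ENNReal.ofReal (C₀ * (s / (3 * r)) ^ q) * volume (ball z (3 * r))
          ≤ ENNReal.ofReal (C₀ * (s / (3 * r)) ^ q) *
            ENNReal.ofReal (c * (3 * r) ^ (d:ℝ)) := mul_le_mul_right hb _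
        _ = ENNReal.ofReal (C₀ * (s / (3 * r)) ^ q * (c * (3 * r) ^ (d:ℝ))) := by
            rw [← ENNReal.ofReal_mul hnn]
        _ ≤ ENNReal.ofReal (C * s ^ q * r ^ ((d:ℝ) - q)) := ENNReal.ofReal_le_ofReal ?_
      have hkey : (s / (3 * r)) ^ q * (3 * r) ^ (d:ℝ) ≤ s ^ q * (3 * r) ^ ((d:ℝ) - q) :=
        keyIneq hs (by linarith) le_rfl hqd
      have hsplit : (3 * r) ^ ((d:ℝ) - q) = 3 ^ ((d:ℝ) - q) * r ^ ((d:ℝ) - q) :=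
        Real.mul_rpow (by norm_num) hr.le
      have h3d : (3:ℝ) ^ ((d:ℝ) - q) ≤ 9 ^ (d:ℝ) := by
        calc (3:ℝ) ^ ((d:ℝ) - q) ≤ 3 ^ (d:ℝ) :=
              Real.rpow_le_rpow_of_exponent_le (by norm_num) (by linarith)
          _ ≤ 9 ^ (d:ℝ) := Real.rpow_le_rpow (by norm_num) (by norm_num) (Nat.cast_nonneg d)
      have h3nn : (0:ℝ) ≤ (3:ℝ) ^ ((d:ℝ) - q) := Real.rpow_nonneg (by norm_num) _
      calc C₀ * (s / (3 * r)) ^ q * (c * (3 * r) ^ (d:ℝ))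
          = (c * C₀) * ((s / (3 * r)) ^ q * (3 * r) ^ (d:ℝ)) := by ring
        _ ≤ (c * C₀) * (s ^ q * (3 * r) ^ ((d:ℝ) - q)) :=
            mul_le_mul_of_nonneg_left hkey (by positivity)
        _ = (c * C₀) * (s ^ q * (3 ^ ((d:ℝ) - q) * r ^ ((d:ℝ) - q))) := by rw [hsplit]
        _ ≤ (c * C₀) * (s ^ q * (9 ^ (d:ℝ) * r ^ ((d:ℝ) - q))) := by
            refine mul_le_mul_of_nonneg_left (mul_le_mul_of_nonneg_left ?_ hsq) (by positivity)
            exact mul_le_mul_of_nonneg_right h3d hrdq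
        _ = (c * C₀ * 9 ^ (d:ℝ)) * (s ^ q * r ^ ((d:ℝ) - q)) := by ring
        _ ≤ C * (s ^ q * r ^ ((d:ℝ) - q)) := by
            refine mul_le_mul_of_nonneg_right ?_ (mul_nonneg hsq hrdq)
            rw [hCdef]
            have h1 : C₀ ≤ C₀ * ((N:ℝ) + 1) + 1 := by nlinarith
            have h2 : c * C₀ ≤ c * (C₀ * ((N:ℝ) + 1) + 1) :=
              mul_le_mul_of_nonneg_left h1 hcpos.le
            exact mul_le_mul_of_nonneg_right h2 (by positivity)
        _ = C * s ^ q * r ^ ((d:ℝ) - q) := by ring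
    · -- the frontier has small diameter : ρ ≤ 3r
      have hρle : ρ ≤ ENNReal.ofReal (3 * r) := not_lt.mp hdiam
      have hρtop : ρ ≠ ⊤ := (lt_of_le_of_lt hρle ENNReal.ofReal_lt_top).ne
      have hρr3 : ρ.toReal ≤ 3 * r := by
        have := ENNReal.toReal_mono ENNReal.ofReal_ne_top hρle
        rwa [ENNReal.toReal_ofReal (by linarith)] at this
      have hρr0 : (0:ℝ) ≤ ρ.toReal := ENNReal.toReal_nonneg
      rcases le_or_gt (ρ.toReal / 8) s with hs8 | hs8
      · -- s is comparable to the diameter : trivial ball bound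
        obtain ⟨z₀, hz₀⟩ := id hFne
        have hsub : T ⊆ ball z₀ (9 * s) := by
          intro y hy
          obtain ⟨z, hzF, hz⟩ := (Metric.infDist_lt_iff hFne).mp (hTδ y hy)
          have hdzz : dist z z₀ ≤ ρ.toReal :=
            Metric.dist_le_diam_of_mem' hρtop hzF hz₀
          rw [mem_ball]
          calc dist y z₀ ≤ dist y z + dist z z₀ := dist_triangle _ _ _
            _ < s + ρ.toReal := by linarith
            _ ≤ 9 * s := by linarith
        refine le_trans (measure_mono hsub)
          (le_trans (hball z₀ (9 * s) (by linarith)) (ENNReal.ofReal_le_ofReal ?_))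
        have h1 : (9 * s) ^ (d:ℝ) = 9 ^ (d:ℝ) * s ^ (d:ℝ) :=
          Real.mul_rpow (by norm_num) hs.le
        have h2 : s ^ (d:ℝ) = s ^ q * s ^ ((d:ℝ) - q) := by
          rw [← Real.rpow_add hs]; congr 1; ring
        have h3 : s ^ ((d:ℝ) - q) ≤ r ^ ((d:ℝ) - q) :=
          Real.rpow_le_rpow hs.le hsr.le (by linarith)
        calc c * (9 * s) ^ (d:ℝ) = (c * 9 ^ (d:ℝ)) * (s ^ q * s ^ ((d:ℝ) - q)) := by
              rw [h1, h2]; ring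
          _ ≤ (c * 9 ^ (d:ℝ)) * (s ^ q * r ^ ((d:ℝ) - q)) := by
              refine mul_le_mul_of_nonneg_left (mul_le_mul_of_nonneg_left h3 hsq) ?_
              positivity
          _ ≤ C * (s ^ q * r ^ ((d:ℝ) - q)) := by
              refine mul_le_mul_of_nonneg_right ?_ (mul_nonneg hsq hrdq)
              rw [hCdef]
              have h4 : c * 1 ≤ c * (C₀ * ((N:ℝ) + 1) + 1) :=
                mul_le_mul_of_nonneg_left hNC hcpos.le
              calc c * 9 ^ (d:ℝ) = (c * 1) * 9 ^ (d:ℝ) := by ring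
                _ ≤ (c * (C₀ * ((N:ℝ) + 1) + 1)) * 9 ^ (d:ℝ) :=
                    mul_le_mul_of_nonneg_right h4 (by positivity)
          _ = C * s ^ q * r ^ ((d:ℝ) - q) := by ring
      · -- s is small : use the finite cover and Aikawa at scale ρ/4
        have hρpos : 0 < ρ.toReal := by linarith
        have hsubcov := htcov hρpos
        set R : ℝ := ρ.toReal / 4 with hRdef
        have hsR : s ≤ R := by rw [hRdef]; linarith
        have hRr : R ≤ r := by rw [hRdef]; linarith
        have hdiamR : ENNReal.ofReal R < ρ := by
          rw [← ENNReal.ofReal_toReal hρtop]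
          exact (ENNReal.ofReal_lt_ofReal_iff hρpos).mpr (by rw [hRdef]; linarith)
        have hsub : T ⊆ ⋃ z ∈ t, {y | y ∈ ball z R ∧ Metric.infDist y F < s} := by
          intro y hy
          obtain ⟨z', hz'F, hz'⟩ := (Metric.infDist_lt_iff hFne).mp (hTδ y hy)
          obtain ⟨z, hzt, hzz'⟩ := Set.mem_iUnion₂.mp (hsubcov hz'F)
          refine Set.mem_biUnion hzt ⟨?_, hTδ y hy⟩
          have h1 : dist z' z < ρ.toReal / 8 := mem_ball.mp hzz'
          rw [mem_ball]
          calc dist y z ≤ dist y z' + dist z' z := dist_triangle _ _ _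
            _ < s + ρ.toReal / 8 := by linarith
            _ ≤ R := by rw [hRdef]; linarith
        have hnn : (0:ℝ) ≤ C₀ * (s / R) ^ q :=
          mul_nonneg hC₀0.le (Real.rpow_nonneg (by positivity) q)
        have hbound : ∀ z ∈ t, volume {y : EuclideanSpace ℝ (Fin d) |
            y ∈ ball z R ∧ Metric.infDist y F < s} ≤
            ENNReal.ofReal (C₀ * (s / R) ^ q * (c * R ^ (d:ℝ))) := by
          intro z hzt
          refine le_trans (hA z (htF z hzt) R s hs hsR hdiamR) ?_
          calc ENNReal.ofReal (C₀ * (s / R) ^ q) * volume (ball z R)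
              ≤ ENNReal.ofReal (C₀ * (s / R) ^ q) * ENNReal.ofReal (c * R ^ (d:ℝ)) :=
                mul_le_mul_right (hball z R (by linarith)) _
            _ = ENNReal.ofReal (C₀ * (s / R) ^ q * (c * R ^ (d:ℝ))) := by
                rw [← ENNReal.ofReal_mul hnn]
        calc volume T ≤ volume (⋃ z ∈ t, {y : EuclideanSpace ℝ (Fin d) |
              y ∈ ball z R ∧ Metric.infDist y F < s}) := measure_mono hsub
          _ ≤ ∑ z ∈ t, volume {y : EuclideanSpace ℝ (Fin d) |
              y ∈ ball z R ∧ Metric.infDist y F < s} := measure_biUnion_finset_le t _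
          _ ≤ ∑ _z ∈ t, ENNReal.ofReal (C₀ * (s / R) ^ q * (c * R ^ (d:ℝ))) :=
              Finset.sum_le_sum hbound
          _ = (N : ℝ≥0∞) * ENNReal.ofReal (C₀ * (s / R) ^ q * (c * R ^ (d:ℝ))) := by
              rw [Finset.sum_const, nsmul_eq_mul, hNdef]
          _ = ENNReal.ofReal ((N:ℝ) * (C₀ * (s / R) ^ q * (c * R ^ (d:ℝ)))) := by
              rw [ENNReal.ofReal_mul hN0, ENNReal.ofReal_natCast]
          _ ≤ ENNReal.ofReal (C * s ^ q * r ^ ((d:ℝ) - q)) := ENNReal.ofReal_le_ofReal ?_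
        have hkey : (s / R) ^ q * R ^ (d:ℝ) ≤ s ^ q * r ^ ((d:ℝ) - q) :=
          keyIneq hs hsR hRr hqd
        calc (N:ℝ) * (C₀ * (s / R) ^ q * (c * R ^ (d:ℝ)))
            = ((N:ℝ) * C₀ * c) * ((s / R) ^ q * R ^ (d:ℝ)) := by ring
          _ ≤ ((N:ℝ) * C₀ * c) * (s ^ q * r ^ ((d:ℝ) - q)) := by
              refine mul_le_mul_of_nonneg_left hkey ?_
              exact mul_nonneg (mul_nonneg hN0 hC₀0.le) hcpos.le
          _ ≤ C * (s ^ q * r ^ ((d:ℝ) - q)) := by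
              refine mul_le_mul_of_nonneg_right ?_ (mul_nonneg hsq hrdq)
              rw [hCdef]
              have h1 : (N:ℝ) * C₀ ≤ C₀ * ((N:ℝ) + 1) + 1 := by nlinarith
              have h2 : c * ((N:ℝ) * C₀) ≤ c * (C₀ * ((N:ℝ) + 1) + 1) :=
                mul_le_mul_of_nonneg_left h1 hcpos.le
              calc (N:ℝ) * C₀ * c = (c * ((N:ℝ) * C₀)) * 1 := by ring
                _ ≤ (c * (C₀ * ((N:ℝ) + 1) + 1)) * 9 ^ (d:ℝ) :=
                    mul_le_mul h2 h9 zero_le_one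
                      (mul_nonneg hcpos.le (by linarith))
          _ = C * s ^ q * r ^ ((d:ℝ) - q) := by ring
end

section
/- Set Λ := 4 + 5/κ. Then for every z ∈ D and every ρ ∈ (0, R₀/Λ), the set (B(z,(Λ−1)ρ) ∩ D_{2ρ}) ∖ B(z,2ρ) is nonempty. In particular, D_ρ ≠ ∅ for every ρ ∈ (0, 2R₀/Λ). -/
open MeasureTheory Metric Set ENNReal Filter

theorem stmt2 {d : ℕ} (hd : 1 ≤ d) (D : Set (EuclideanSpace ℝ (Fin d)))
    (hDopen : IsOpen D) (hDne : D.Nonempty) (hfr : (frontier D).Nonempty)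
    (κ : ℝ) (hκ0 : 0 < κ) (hκ1 : κ < 1) (R₀ : ℝ≥0∞) (hR₀0 : 0 < R₀)
    (hR₀diam : R₀ ≤ EMetric.diam D)
    (hfat : ∀ x ∈ closure D, ∀ r : ℝ, 0 < r → ENNReal.ofReal r < R₀ →
      ∃ z ∈ D, Metric.ball z (κ * r) ⊆ D ∩ Metric.ball x r) :
    (∀ z ∈ D, ∀ ρ : ℝ, 0 < ρ → ENNReal.ofReal ((4 + 5 / κ) * ρ) < R₀ →
      (((Metric.ball z (((4 + 5 / κ) - 1) * ρ) ∩ D) ∩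
          {x : EuclideanSpace ℝ (Fin d) | 2 * ρ < deltaD D x}) \
        Metric.ball z (2 * ρ)).Nonempty) ∧
    (∀ ρ : ℝ, 0 < ρ → ENNReal.ofReal ((4 + 5 / κ) * ρ) < 2 * R₀ →
      ∃ x ∈ D, ρ < deltaD D x) := by
  classical
  have hΛpos : (0:ℝ) < 4 + 5 / κ := by positivity
  have main : ∀ z ∈ D, ∀ ρ : ℝ, 0 < ρ → ENNReal.ofReal ((4 + 5 / κ) * ρ) < R₀ →
      (((Metric.ball z (((4 + 5 / κ) - 1) * ρ) ∩ D) ∩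
          {x : EuclideanSpace ℝ (Fin d) | 2 * ρ < deltaD D x}) \
        Metric.ball z (2 * ρ)).Nonempty := by
    intro z hz ρ hρ hlt
    have hκΛ : κ * ((4 + 5 / κ) * ρ) = (4 * κ + 5) * ρ := by field_simp
    obtain ⟨z', hz'D, hsub⟩ :=
      hfat z (subset_closure hz) ((4 + 5 / κ) * ρ) (by positivity) hlt
    rw [hκΛ] at hsub
    -- the unit direction e, aligned with z' - z (or arbitrary if z' = z)
    set u : EuclideanSpace ℝ (Fin d) := z' - z with hu
    set e : EuclideanSpace ℝ (Fin d) :=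
      if u = 0 then EuclideanSpace.single (⟨0, hd⟩ : Fin d) (1:ℝ) else ‖u‖⁻¹ • u with he
    have hdist : ∀ t : ℝ, 0 ≤ t → dist (z' + t • e) z = dist z' z + t := by
      intro t ht
      rw [dist_eq_norm, dist_eq_norm, add_sub_right_comm, ← hu]
      by_cases h : u = 0
      · simp [he, h, norm_smul, abs_of_nonneg ht, EuclideanSpace.norm_single]
      · have hun : (0:ℝ) < ‖u‖ := norm_pos_iff.2 h
        have hrw : u + t • (‖u‖⁻¹ • u) = (1 + t * ‖u‖⁻¹) • u := by
          rw [smul_smul, add_smul, one_smul]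
        rw [he, if_neg h, hrw, norm_smul, Real.norm_eq_abs, abs_of_nonneg (by positivity)]
        field_simp
    -- the candidate point
    set w : EuclideanSpace ℝ (Fin d) := z' + (3 * ρ) • e with hw
    have hdw : dist w z = dist z' z + 3 * ρ := hdist (3 * ρ) (by positivity)
    have hwz' : dist w z' = 3 * ρ := by
      have he1 : ‖e‖ = 1 := by
        by_cases h : u = 0
        · simp [he, h, EuclideanSpace.norm_single]
        · have hun : (0:ℝ) < ‖u‖ := norm_pos_iff.2 h
          rw [he, if_neg h, norm_smul, norm_inv, norm_norm, inv_mul_cancel₀ hun.ne']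
      rw [hw, dist_eq_norm, add_sub_cancel_left, norm_smul, he1, mul_one,
        Real.norm_eq_abs, abs_of_nonneg (by positivity)]
    have hwball : w ∈ Metric.ball z' ((4 * κ + 5) * ρ) := by
      rw [Metric.mem_ball, hwz']; nlinarith
    have hwD : w ∈ D := (hsub hwball).1
    -- upper bound on dist z' z using the aligned point at parameter 4ρ
    have hp : dist z' z + 4 * ρ < (4 + 5 / κ) * ρ := by
      have hpball : z' + (4 * ρ) • e ∈ Metric.ball z' ((4 * κ + 5) * ρ) := by
        have : dist (z' + (4 * ρ) • e) z' = 4 * ρ := by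
          have he1 : ‖e‖ = 1 := by
            by_cases h : u = 0
            · simp [he, h, EuclideanSpace.norm_single]
            · have hun : (0:ℝ) < ‖u‖ := norm_pos_iff.2 h
              rw [he, if_neg h, norm_smul, norm_inv, norm_norm, inv_mul_cancel₀ hun.ne']
          rw [dist_eq_norm, add_sub_cancel_left, norm_smul, he1, mul_one,
            Real.norm_eq_abs, abs_of_nonneg (by positivity)]
        rw [Metric.mem_ball, this]; nlinarith
      have := (hsub hpball).2
      rw [Metric.mem_ball, hdist (4 * ρ) (by positivity)] at this
      exact this
    -- lower bound on deltaD at w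
    have hdelta : (4 * κ + 2) * ρ ≤ deltaD D w := by
      refine le_of_not_gt fun hc => ?_
      rw [deltaD, Metric.infDist_lt_iff hfr] at hc
      obtain ⟨y, hy, hyd⟩ := hc
      have hyD : y ∉ D := by
        rw [hDopen.frontier_eq] at hy
        exact hy.2
      have : y ∉ Metric.ball z' ((4 * κ + 5) * ρ) := fun hyb => hyD (hsub hyb).1
      rw [Metric.mem_ball, not_lt] at this
      have htri : dist y z' ≤ dist y w + dist w z' := dist_triangle y w z'
      rw [hwz'] at htri
      rw [dist_comm] at hyd
      linarith
    refine ⟨w, ⟨⟨?_, hwD⟩, ?_⟩, ?_⟩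
    · rw [Metric.mem_ball, hdw]; nlinarith
    · show 2 * ρ < deltaD D w
      nlinarith
    · rw [Metric.mem_ball, hdw, not_lt]
      have : (0:ℝ) ≤ dist z' z := dist_nonneg
      linarith
  refine ⟨main, fun ρ hρ hlt => ?_⟩
  obtain ⟨z, hz⟩ := hDne
  have h2 : ENNReal.ofReal ((4 + 5 / κ) * (ρ / 2)) < R₀ := by
    have heq : (4 + 5 / κ) * ρ = 2 * ((4 + 5 / κ) * (ρ / 2)) := by ring
    rw [heq, ENNReal.ofReal_mul (by norm_num), ENNReal.ofReal_ofNat] at hlt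
    exact lt_of_mul_lt_mul_left' hlt
  obtain ⟨x, ⟨⟨-, hxD⟩, hxδ⟩, -⟩ := main z hz (ρ / 2) (by positivity) h2
  refine ⟨x, hxD, ?_⟩
  have : 2 * (ρ / 2) < deltaD D x := hxδ
  linarith
end

section
/- Let 0 ≤ q < q' ≤ d and suppose that ∂D satisfies the Aikawa condition with exponent q'. Then there exists C > 0 such that for every A ∈ (0,∞], every x ∈ closure(D) and every r > 0, ∫_{B_D(x,r)} (δ_D(y) ∧ A)^{−q} dy ≤ C r^d ((max(δ_D(x), r)) ∧ A)^{−q}. -/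
open MeasureTheory Metric Set ENNReal Filter

section
variable {d : ℕ} {D : Set (EuclideanSpace ℝ (Fin d))} {A : ℝ≥0∞}

private lemma volBall (hd : 1 ≤ d) (x : EuclideanSpace ℝ (Fin d)) {r : ℝ} (hr : 0 ≤ r) :
    volume (ball x r) = ENNReal.ofReal (r ^ d *
      (volume (ball (0 : EuclideanSpace ℝ (Fin d)) 1)).toReal) := by
  have : Nontrivial (EuclideanSpace ℝ (Fin d)) :=
    nontrivial_of_ne (EuclideanSpace.single ⟨0, hd⟩ 1) 0 (by
      intro h
      have := congrArg (fun v : EuclideanSpace ℝ (Fin d) => v ⟨0, hd⟩) h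
      simp [EuclideanSpace.single] at this)
  have h := Measure.addHaar_ball (μ := (volume : Measure (EuclideanSpace ℝ (Fin d)))) x hr
  rw [finrank_euclideanSpace_fin] at h
  rw [h, ENNReal.ofReal_mul (by positivity), ENNReal.ofReal_toReal measure_ball_lt_top.ne]

-- covering lemma
private lemma coverBound (hfr : (frontier D).Nonempty) {q' C₀ : ℝ} (hq'0 : 0 < q') (hC₀ : 1 ≤ C₀)
    (hA : ∀ x ∈ frontier D, ∀ r s : ℝ, 0 < s → s ≤ r →
      ENNReal.ofReal r < EMetric.diam (frontier D) →
      volume {y : EuclideanSpace ℝ (Fin d) |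
          y ∈ ball x r ∧ Metric.infDist y (frontier D) < s} ≤
        ENNReal.ofReal (C₀ * (s / r) ^ q') * volume (ball x r)) (hd : 1 ≤ d) :
    ∃ N : ℝ, 0 < N ∧ ∀ s : ℝ, 0 < s → 4 * s < (EMetric.diam (frontier D)).toReal →
      volume {y : EuclideanSpace ℝ (Fin d) | Metric.infDist y (frontier D) < s} ≤
        ENNReal.ofReal (N * s ^ q') := by
  set L : ℝ := (EMetric.diam (frontier D)).toReal with hL
  by_cases hLpos : 0 < L
  swap
  · exact ⟨1, one_pos, fun s hs h4 => absurd ((by linarith : (0:ℝ) < 4*s).trans h4) hLpos⟩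
  -- frontier is bounded and compact
  have hdne : EMetric.diam (frontier D) ≠ ⊤ := by
    intro h; rw [hL, h] at hLpos; simp at hLpos
  have hbdd : Bornology.IsBounded (frontier D) := by
    rw [Metric.isBounded_iff_ediam_ne_top]; exact hdne
  have hcpt : IsCompact (frontier D) := Metric.isCompact_of_isClosed_isBounded isClosed_frontier hbdd
  -- finite cover by balls of radius L/4
  obtain ⟨t, ht⟩ := hcpt.elim_finite_subcover
    (fun w : frontier D => ball (w : EuclideanSpace ℝ (Fin d)) (L/4))
    (fun w => isOpen_ball)
    (fun y hy => mem_iUnion.2 ⟨⟨y, hy⟩, mem_ball_self (by linarith)⟩)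
  set ν : ℝ := (volume (ball (0 : EuclideanSpace ℝ (Fin d)) 1)).toReal with hν
  have hν0 : 0 < ν := ENNReal.toReal_pos (measure_ball_pos _ _ one_pos).ne' measure_ball_lt_top.ne
  refine ⟨(t.card + 1) * (C₀ * ((2/L) ^ q' * ((L/2)^d * ν))), by positivity, fun s hs h4 => ?_⟩
  have hsL : s ≤ L / 2 := by linarith
  -- inclusion into the union of balls
  have hincl : {y : EuclideanSpace ℝ (Fin d) | Metric.infDist y (frontier D) < s} ⊆
      ⋃ w ∈ t, {y : EuclideanSpace ℝ (Fin d) |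
        y ∈ ball (w : EuclideanSpace ℝ (Fin d)) (L/2) ∧ Metric.infDist y (frontier D) < s} := by
    intro y hy
    obtain ⟨w', hw', hd'⟩ := (Metric.infDist_lt_iff hfr).1 hy
    obtain ⟨w, hwt, hww'⟩ := mem_iUnion₂.1 (ht hw')
    refine mem_iUnion₂.2 ⟨w, hwt, ?_, hy⟩
    rw [mem_ball]
    calc dist y (w : EuclideanSpace ℝ (Fin d)) ≤ dist y w' + dist w' w := dist_triangle _ _ _
    _ < s + L/4 := add_lt_add hd' (mem_ball.1 hww')
    _ ≤ L/2 := by linarith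
  refine (measure_mono hincl).trans ?_
  refine (measure_biUnion_finset_le t _).trans ?_
  have hball : ∀ w ∈ t, volume {y : EuclideanSpace ℝ (Fin d) |
        y ∈ ball (w : EuclideanSpace ℝ (Fin d)) (L/2) ∧ Metric.infDist y (frontier D) < s} ≤
      ENNReal.ofReal (C₀ * ((2/L) ^ q' * ((L/2)^d * ν)) * s ^ q') := by
    intro w hwt
    have h1 := hA w w.2 (L/2) s hs hsL (by
      rw [← ENNReal.ofReal_toReal hdne, ← hL, ENNReal.ofReal_lt_ofReal_iff hLpos]
      linarith)
    refine h1.trans ?_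
    rw [volBall hd _ (by linarith : (0:ℝ) ≤ L/2), ← ENNReal.ofReal_mul (by positivity)]
    have : (s / (L/2)) ^ q' = (2/L) ^ q' * s ^ q' := by
      rw [← Real.mul_rpow (by positivity) hs.le]
      congr 1; field_simp
    exact ENNReal.ofReal_le_ofReal (le_of_eq (by rw [this]; ring))
  calc ∑ w ∈ t, volume {y : EuclideanSpace ℝ (Fin d) |
        y ∈ ball (w : EuclideanSpace ℝ (Fin d)) (L/2) ∧ Metric.infDist y (frontier D) < s}
      ≤ ∑ _w ∈ t, ENNReal.ofReal (C₀ * ((2/L) ^ q' * ((L/2)^d * ν)) * s ^ q') :=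
        Finset.sum_le_sum hball
    _ = t.card * ENNReal.ofReal (C₀ * ((2/L) ^ q' * ((L/2)^d * ν)) * s ^ q') := by
        rw [Finset.sum_const, nsmul_eq_mul]
    _ ≤ ENNReal.ofReal ((t.card + 1) * (C₀ * ((2/L) ^ q' * ((L/2)^d * ν))) * s ^ q') := by
        rw [← ENNReal.ofReal_natCast t.card, ← ENNReal.ofReal_mul (by positivity)]
        apply ENNReal.ofReal_le_ofReal
        have h1 : (0:ℝ) ≤ C₀ * ((2/L) ^ q' * ((L/2)^d * ν)) * s ^ q' := by positivity
        nlinarith [h1]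

private lemma rpow_split {s r q' : ℝ} (hs : 0 < s) (hr : 0 < r) {d : ℕ} :
    (s/r) ^ q' * r ^ (d:ℝ) = s ^ q' * r ^ ((d:ℝ) - q') := by
  rw [Real.div_rpow hs.le hr.le, Real.rpow_sub hr]; ring

private lemma aikawaFull (hd : 1 ≤ d) (hfr : (frontier D).Nonempty) {q' C₀ : ℝ}
    (hq'0 : 0 < q') (hq'd : q' ≤ (d:ℝ)) (hC₀ : 1 ≤ C₀)
    (hA : ∀ x ∈ frontier D, ∀ r s : ℝ, 0 < s → s ≤ r →
      ENNReal.ofReal r < EMetric.diam (frontier D) →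
      volume {y : EuclideanSpace ℝ (Fin d) |
          y ∈ ball x r ∧ Metric.infDist y (frontier D) < s} ≤
        ENNReal.ofReal (C₀ * (s / r) ^ q') * volume (ball x r)) :
    ∃ C₁ : ℝ, 0 < C₁ ∧ ∀ z ∈ frontier D, ∀ r s : ℝ, 0 < s → s ≤ r →
      volume {y : EuclideanSpace ℝ (Fin d) |
          y ∈ ball z r ∧ Metric.infDist y (frontier D) < s} ≤
        ENNReal.ofReal (C₁ * ((s/r) ^ q' * r ^ (d:ℝ))) := by
  obtain ⟨N, hN0, hNb⟩ := coverBound hfr hq'0 hC₀ hA hd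
  set ν : ℝ := (volume (ball (0 : EuclideanSpace ℝ (Fin d)) 1)).toReal with hν
  have hν0 : 0 < ν := ENNReal.toReal_pos (measure_ball_pos _ _ one_pos).ne' measure_ball_lt_top.ne
  set L : ℝ := (EMetric.diam (frontier D)).toReal with hLdef
  have hL0 : 0 ≤ L := ENNReal.toReal_nonneg
  refine ⟨C₀ * ν + ((5:ℝ)^d * ν + N * (L ^ ((d:ℝ) - q'))⁻¹), by positivity, ?_⟩
  intro z hz r s hs hsr
  have hr : 0 < r := hs.trans_le hsr
  have hfac : 0 < (s/r) ^ q' * r ^ (d:ℝ) := by positivity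
  by_cases hcase : ENNReal.ofReal r < EMetric.diam (frontier D)
  · -- small scale : direct Aikawa
    refine (hA z hz r s hs hsr hcase).trans ?_
    rw [volBall hd _ hr.le, ← ENNReal.ofReal_mul (by positivity)]
    apply ENNReal.ofReal_le_ofReal
    have heq : C₀ * (s / r) ^ q' * (r ^ d * ν) = (C₀ * ν) * ((s/r) ^ q' * r ^ (d:ℝ)) := by
      rw [Real.rpow_natCast]; ring
    rw [heq]
    apply mul_le_mul_of_nonneg_right _ hfac.le
    nlinarith [Real.rpow_nonneg hL0 ((d:ℝ) - q'), mul_nonneg ((pow_nonneg (by norm_num : (0:ℝ) ≤ 5) d)) hν0.le, mul_nonneg hN0.le (inv_nonneg.2 (Real.rpow_nonneg hL0 ((d:ℝ) - q')))]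
  · -- large scale
    push_neg at hcase
    have hdne : EMetric.diam (frontier D) ≠ ⊤ :=
      fun hh => ENNReal.ofReal_ne_top (top_le_iff.1 (hh ▸ hcase))
    have hbdd : Bornology.IsBounded (frontier D) := by
      rw [Metric.isBounded_iff_ediam_ne_top]; exact hdne
    have hLr : L ≤ r := by
      have := (ENNReal.toReal_le_toReal hdne ENNReal.ofReal_ne_top).2 hcase
      rwa [ENNReal.toReal_ofReal hr.le] at this
    by_cases hs4 : 4 * s < L
    · -- use the covering bound
      have hL0' : 0 < L := by linarith
      have h1 : volume {y : EuclideanSpace ℝ (Fin d) |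
          y ∈ ball z r ∧ Metric.infDist y (frontier D) < s} ≤
          ENNReal.ofReal (N * s ^ q') :=
        (measure_mono (fun y hy => hy.2)).trans (hNb s hs hs4)
      refine h1.trans (ENNReal.ofReal_le_ofReal ?_)
      rw [rpow_split hs hr]
      have hLe : L ^ ((d:ℝ) - q') ≤ r ^ ((d:ℝ) - q') :=
        Real.rpow_le_rpow hL0 hLr (by linarith)
      have hLe0 : 0 < L ^ ((d:ℝ) - q') := Real.rpow_pos_of_pos hL0' _
      calc N * s ^ q' = (N * (L ^ ((d:ℝ) - q'))⁻¹) * (s ^ q' * L ^ ((d:ℝ) - q')) := by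
            field_simp
        _ ≤ (N * (L ^ ((d:ℝ) - q'))⁻¹) * (s ^ q' * r ^ ((d:ℝ) - q')) := by
            apply mul_le_mul_of_nonneg_left _ (by positivity)
            exact mul_le_mul_of_nonneg_left hLe (Real.rpow_nonneg hs.le _)
        _ ≤ (C₀ * ν + ((5:ℝ)^d * ν + N * (L ^ ((d:ℝ) - q'))⁻¹)) * (s ^ q' * r ^ ((d:ℝ) - q')) := by
            apply mul_le_mul_of_nonneg_right _ (by positivity)
            nlinarith [mul_pos (lt_of_lt_of_le zero_lt_one hC₀) hν0, mul_nonneg ((pow_nonneg (by norm_num : (0:ℝ) ≤ 5) d)) hν0.le]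
    · -- s is comparable to L : whole thin set in a ball of radius 5s
      push_neg at hs4
      have hincl : {y : EuclideanSpace ℝ (Fin d) |
          y ∈ ball z r ∧ Metric.infDist y (frontier D) < s} ⊆ ball z (5*s) := by
        rintro y ⟨-, hy⟩
        obtain ⟨w, hw, hyw⟩ := (Metric.infDist_lt_iff hfr).1 hy
        have hwz : dist w z ≤ L := Metric.dist_le_diam_of_mem hbdd hw hz
        rw [mem_ball]
        calc dist y z ≤ dist y w + dist w z := dist_triangle _ _ _
          _ < s + L := add_lt_add_of_lt_of_le hyw hwz
          _ ≤ 5 * s := by linarith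
      refine (measure_mono hincl).trans ?_
      rw [volBall hd _ (by linarith : (0:ℝ) ≤ 5*s)]
      apply ENNReal.ofReal_le_ofReal
      have h5 : (5*s) ^ d * ν = 5^d * ν * s ^ (d:ℝ) := by
        rw [Real.rpow_natCast, mul_pow]; ring
      rw [h5, rpow_split hs hr]
      have hsd : s ^ (d:ℝ) ≤ s ^ q' * r ^ ((d:ℝ) - q') := by
        have : s ^ (d:ℝ) = s ^ q' * s ^ ((d:ℝ) - q') := by
          rw [← Real.rpow_add hs]; ring_nf
        rw [this]
        exact mul_le_mul_of_nonneg_left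
          (Real.rpow_le_rpow hs.le hsr (by linarith)) (Real.rpow_nonneg hs.le _)
      calc 5^d * ν * s ^ (d:ℝ) ≤ 5^d * ν * (s ^ q' * r ^ ((d:ℝ) - q')) :=
            mul_le_mul_of_nonneg_left hsd (by positivity)
        _ ≤ (C₀ * ν + ((5:ℝ)^d * ν + N * (L ^ ((d:ℝ) - q'))⁻¹)) * (s ^ q' * r ^ ((d:ℝ) - q')) := by
            apply mul_le_mul_of_nonneg_right _ (by positivity)
            nlinarith [mul_pos (lt_of_lt_of_le zero_lt_one hC₀) hν0,
              mul_nonneg hN0.le (inv_nonneg.2 (Real.rpow_nonneg hL0 ((d:ℝ) - q')))]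

private lemma truncMin_ne_top (A : ℝ≥0∞) (r : ℝ) : min (ENNReal.ofReal r) A ≠ ⊤ :=
  ((min_le_left _ _).trans_lt ENNReal.ofReal_lt_top).ne

private lemma ofReal_truncMin (A : ℝ≥0∞) (r : ℝ) :
    ENNReal.ofReal (truncMin A r) = min (ENNReal.ofReal r) A :=
  ENNReal.ofReal_toReal (truncMin_ne_top A r)

private lemma truncMin_pos (hA : 0 < A) {r : ℝ} (hr : 0 < r) : 0 < truncMin A r :=
  ENNReal.toReal_pos (lt_min (ENNReal.ofReal_pos.2 hr) hA).ne' (truncMin_ne_top A r)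

private lemma truncMin_le_self {r : ℝ} (hr : 0 ≤ r) : truncMin A r ≤ r := by
  have := ENNReal.toReal_mono ENNReal.ofReal_ne_top (min_le_left (ENNReal.ofReal r) A)
  rwa [ENNReal.toReal_ofReal hr] at this

private lemma le_truncMin {b a : ℝ} (hb : 0 ≤ b) (hba : b ≤ a)
    (hbA : ENNReal.ofReal b ≤ A) : b ≤ truncMin A a := by
  have h : ENNReal.ofReal b ≤ min (ENNReal.ofReal a) A :=
    le_min (ENNReal.ofReal_le_ofReal hba) hbA
  have := ENNReal.toReal_mono (truncMin_ne_top A a) h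
  rwa [ENNReal.toReal_ofReal hb] at this

private lemma truncMin_two_mul {r : ℝ} (hr : 0 ≤ r) : truncMin A (2*r) ≤ 2 * truncMin A r := by
  unfold truncMin
  have h2 : ENNReal.ofReal (2*r) = 2 * ENNReal.ofReal r := by
    rw [ENNReal.ofReal_mul (by norm_num)]; norm_num
  have hmin : min (ENNReal.ofReal (2*r)) A ≤ 2 * min (ENNReal.ofReal r) A := by
    rw [h2]
    rcases le_total (ENNReal.ofReal r) A with h | h
    · rw [min_eq_left h]
      exact min_le_left _ _
    · rw [min_eq_right h]
      exact (min_le_right _ _).trans (le_mul_of_one_le_left (by positivity) (by norm_num))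
  have := ENNReal.toReal_mono (by
      refine ENNReal.mul_ne_top (by norm_num) (truncMin_ne_top A r)) hmin
  rwa [ENNReal.toReal_mul, ENNReal.toReal_ofNat] at this

private lemma deltaD_nonneg (D : Set (EuclideanSpace ℝ (Fin d))) (y : EuclideanSpace ℝ (Fin d)) :
    0 ≤ deltaD D y := Metric.infDist_nonneg

private lemma deltaD_pos (hDopen : IsOpen D) (hfr : (frontier D).Nonempty)
    {y : EuclideanSpace ℝ (Fin d)} (hy : y ∈ D) : 0 < deltaD D y := by
  obtain ⟨ε, hε, hball⟩ := Metric.isOpen_iff.1 hDopen y hy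
  by_contra hcon
  push_neg at hcon
  have hlt : Metric.infDist y (frontier D) < ε := lt_of_le_of_lt hcon hε
  obtain ⟨w, hw, hyw⟩ := (Metric.infDist_lt_iff hfr).1 hlt
  have : w ∈ D := hball (by rwa [mem_ball, dist_comm])
  exact (hDopen.frontier_eq ▸ hw).2 this

end

section
variable {d : ℕ} {D : Set (EuclideanSpace ℝ (Fin d))}

private lemma aikawaNear (hd : 1 ≤ d) (hfr : (frontier D).Nonempty) {q' C₀ : ℝ}
    (hq'0 : 0 < q') (hq'd : q' ≤ (d:ℝ)) (hC₀ : 1 ≤ C₀)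
    (hA : ∀ x ∈ frontier D, ∀ r s : ℝ, 0 < s → s ≤ r →
      ENNReal.ofReal r < EMetric.diam (frontier D) →
      volume {y : EuclideanSpace ℝ (Fin d) |
          y ∈ ball x r ∧ Metric.infDist y (frontier D) < s} ≤
        ENNReal.ofReal (C₀ * (s / r) ^ q') * volume (ball x r)) :
    ∃ C₂ : ℝ, 0 < C₂ ∧ ∀ x : EuclideanSpace ℝ (Fin d), ∀ r s : ℝ, 0 < r →
      Metric.infDist x (frontier D) < 2*r → 0 < s → s ≤ r →
      volume {y : EuclideanSpace ℝ (Fin d) |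
          y ∈ ball x r ∧ Metric.infDist y (frontier D) < s} ≤
        ENNReal.ofReal (C₂ * ((s/r) ^ q' * r ^ (d:ℝ))) := by
  obtain ⟨C₁, hC₁0, hC₁⟩ := aikawaFull hd hfr hq'0 hq'd hC₀ hA
  refine ⟨C₁ * 3 ^ d, by positivity, fun x r s hr hx hs hsr => ?_⟩
  obtain ⟨z, hz, hxz⟩ := (Metric.infDist_lt_iff hfr).1 hx
  have hincl : {y : EuclideanSpace ℝ (Fin d) |
      y ∈ ball x r ∧ Metric.infDist y (frontier D) < s} ⊆
      {y : EuclideanSpace ℝ (Fin d) |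
      y ∈ ball z (3*r) ∧ Metric.infDist y (frontier D) < s} := by
    rintro y ⟨hy1, hy2⟩
    refine ⟨?_, hy2⟩
    rw [mem_ball] at hy1 ⊢
    calc dist y z ≤ dist y x + dist x z := dist_triangle _ _ _
      _ < r + 2*r := add_lt_add hy1 hxz
      _ = 3*r := by ring
  refine (measure_mono hincl).trans ?_
  refine (hC₁ z hz (3*r) s hs (by linarith)).trans (ENNReal.ofReal_le_ofReal ?_)
  have h3 : (3*r) ^ (d:ℝ) = 3^d * r ^ (d:ℝ) := by
    rw [Real.rpow_natCast, Real.rpow_natCast, mul_pow]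
  have hq : (s/(3*r)) ^ q' ≤ (s/r) ^ q' := by
    apply Real.rpow_le_rpow (by positivity) _ hq'0.le
    apply div_le_div_of_nonneg_left hs.le hr (by linarith)
  calc C₁ * ((s/(3*r)) ^ q' * (3*r) ^ (d:ℝ))
      ≤ C₁ * ((s/r) ^ q' * (3*r) ^ (d:ℝ)) := by
        apply mul_le_mul_of_nonneg_left _ hC₁0.le
        exact mul_le_mul_of_nonneg_right hq (Real.rpow_nonneg (by linarith) _)
    _ = C₁ * 3^d * ((s/r) ^ q' * r ^ (d:ℝ)) := by rw [h3]; ring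

end

theorem stmt3 {d : ℕ} (hd : 1 ≤ d) (D : Set (EuclideanSpace ℝ (Fin d)))
    (hDopen : IsOpen D) (hDne : D.Nonempty) (hfr : (frontier D).Nonempty)
    (q q' : ℝ) (hq0 : 0 ≤ q) (hqq' : q < q') (hq'd : q' ≤ (d : ℝ))
    (hAik : Aikawa D q') :
    ∃ C : ℝ, 0 < C ∧ ∀ A : ℝ≥0∞, 0 < A → ∀ x ∈ closure D, ∀ r : ℝ, 0 < r →
      (∫⁻ y in D ∩ Metric.ball x r,
          ENNReal.ofReal ((truncMin A (deltaD D y)) ^ (-q))) ≤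
        ENNReal.ofReal (C * r ^ (d : ℝ) *
          (truncMin A (max (deltaD D x) r)) ^ (-q)) := by
  classical
  have hq'0 : 0 < q' := lt_of_le_of_lt hq0 hqq'
  obtain ⟨C₀, hC₀, hA⟩ := hAik
  obtain ⟨C₂, hC₂0, hB⟩ := aikawaNear hd hfr hq'0 hq'd hC₀ hA
  set ν : ℝ := (volume (ball (0 : EuclideanSpace ℝ (Fin d)) 1)).toReal with hν
  have hν0 : 0 < ν := ENNReal.toReal_pos (measure_ball_pos _ _ one_pos).ne' measure_ball_lt_top.ne
  set θ : ℝ := (2:ℝ) ^ (q - q') with hθdef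
  have hθ0 : 0 < θ := Real.rpow_pos_of_pos two_pos _
  have hθ1 : θ < 1 := Real.rpow_lt_one_of_one_lt_of_neg one_lt_two (by linarith)
  have h2q : (0:ℝ) < (2:ℝ) ^ q := Real.rpow_pos_of_pos two_pos _
  have h1θ : (0:ℝ) < 1 - θ := by linarith
  have hinv : (0:ℝ) < (1-θ)⁻¹ := inv_pos.2 h1θ
  set K : ℝ := (2:ℝ)^q * (ν + (2:ℝ)^q * C₂ * (1-θ)⁻¹) with hKdef
  have hterm2 : (0:ℝ) < (2:ℝ)^q * C₂ * (1-θ)⁻¹ := mul_pos (mul_pos h2q hC₂0) hinv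
  have hK0 : 0 < K := mul_pos h2q (by linarith)
  refine ⟨K, hK0, ?_⟩
  intro A hA0 x hx r hr
  have hδx0 : 0 ≤ deltaD D x := Metric.infDist_nonneg
  have hmaxr : 0 < max (deltaD D x) r := lt_max_of_lt_right hr
  set T : ℝ := truncMin A (max (deltaD D x) r) with hT
  have hT0 : 0 < T := truncMin_pos hA0 hmaxr
  have hTq0 : 0 < T ^ (-q) := Real.rpow_pos_of_pos hT0 _
  rcases le_or_gt (2*r) (deltaD D x) with hc | hc
  · -- far case
    have hmax : max (deltaD D x) r = deltaD D x := max_eq_left (by linarith)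
    have hTle : T ≤ deltaD D x := by rw [hT, hmax]; exact truncMin_le_self hδx0
    have hpt : ∀ y ∈ ball x r, ENNReal.ofReal ((truncMin A (deltaD D y)) ^ (-q)) ≤
        ENNReal.ofReal ((T/2) ^ (-q)) := by
      intro y hy
      have hdist : dist x y < r := by rw [mem_ball] at hy; rw [dist_comm]; exact hy
      have hδy : deltaD D x - r ≤ deltaD D y := by
        have h := Metric.infDist_le_infDist_add_dist (x := x) (y := y) (s := frontier D)
        have : deltaD D x ≤ deltaD D y + dist x y := h
        linarith [hdist.le]
      have h1 : T/2 ≤ deltaD D y := by linarith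
      have h2 : ENNReal.ofReal (T/2) ≤ A := by
        refine le_trans (ENNReal.ofReal_le_ofReal (by linarith : T/2 ≤ T)) ?_
        rw [hT, ofReal_truncMin]; exact min_le_right _ _
      have h3 : T/2 ≤ truncMin A (deltaD D y) := le_truncMin (by linarith) h1 h2
      exact ENNReal.ofReal_le_ofReal
        (Real.rpow_le_rpow_of_nonpos (half_pos hT0) h3 (neg_nonpos.2 hq0))
    calc (∫⁻ y in D ∩ ball x r, ENNReal.ofReal ((truncMin A (deltaD D y)) ^ (-q)))
        ≤ ∫⁻ y in ball x r, ENNReal.ofReal ((truncMin A (deltaD D y)) ^ (-q)) :=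
          lintegral_mono_set inter_subset_right
      _ ≤ ∫⁻ _y in ball x r, ENNReal.ofReal ((T/2) ^ (-q)) :=
          setLIntegral_mono' measurableSet_ball hpt
      _ = ENNReal.ofReal ((T/2) ^ (-q)) * volume (ball x r) := setLIntegral_const _ _
      _ ≤ ENNReal.ofReal (K * r ^ (d:ℝ) * T ^ (-q)) := by
          rw [volBall hd x hr.le, ← ENNReal.ofReal_mul (Real.rpow_nonneg (by positivity) _)]
          apply ENNReal.ofReal_le_ofReal
          have hhalf : (T/2) ^ (-q) = 2^q * T ^ (-q) := by
            rw [Real.div_rpow hT0.le (by norm_num : (0:ℝ) ≤ 2),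
              Real.rpow_neg (by norm_num : (0:ℝ) ≤ 2)]
            field_simp
          rw [hhalf, ← Real.rpow_natCast r d]
          have heq : 2^q * T ^ (-q) * (r^(d:ℝ) * ν) = (2^q * ν) * (r^(d:ℝ) * T^(-q)) := by ring
          rw [heq]
          have hKb : (2:ℝ)^q * ν ≤ K := by
            rw [hKdef]; nlinarith
          calc (2^q * ν) * (r^(d:ℝ) * T^(-q)) ≤ K * (r^(d:ℝ) * T^(-q)) :=
                mul_le_mul_of_nonneg_right hKb (by positivity)
            _ = K * r^(d:ℝ) * T^(-q) := by ring
  · -- near case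
    set t : ℝ := truncMin A r with ht
    have ht0 : 0 < t := truncMin_pos hA0 hr
    have htr : t ≤ r := truncMin_le_self hr.le
    have htA : ENNReal.ofReal t ≤ A := by rw [ht, ofReal_truncMin]; exact min_le_right _ _
    have hT2t : T ≤ 2 * t := by
      rw [hT, ht]
      refine le_trans ?_ (truncMin_two_mul hr.le)
      exact ENNReal.toReal_mono (truncMin_ne_top _ _)
        (min_le_min (ENNReal.ofReal_le_ofReal (max_le (by linarith) (by linarith))) le_rfl)
    have htT : t ^ (-q) ≤ 2^q * T ^ (-q) := by
      have h1 : (2*t) ^ (-q) ≤ T ^ (-q) :=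
        Real.rpow_le_rpow_of_nonpos hT0 hT2t (neg_nonpos.2 hq0)
      have h2 : ((2:ℝ)*t) ^ (-q) = 2^(-q) * t^(-q) := Real.mul_rpow (by norm_num) ht0.le
      have h3 : (2:ℝ)^(-q) = ((2:ℝ)^q)⁻¹ := Real.rpow_neg (by norm_num) q
      have h4 : t ^ (-q) = 2^q * ((2*t) ^ (-q)) := by
        rw [h2, h3]; field_simp
      rw [h4]
      exact mul_le_mul_of_nonneg_left h1 h2q.le
    set u : ℕ → ℝ := fun k => t * ((2:ℝ)⁻¹)^k with hu
    have hu0 : ∀ k, 0 < u k := fun k => mul_pos ht0 (pow_pos (by norm_num) k)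
    have hut : ∀ k, u k ≤ t := fun k => by
      have h1 : ((2:ℝ)⁻¹)^k ≤ 1 := pow_le_one₀ (by norm_num) (by norm_num)
      calc u k = t * ((2:ℝ)⁻¹)^k := rfl
        _ ≤ t * 1 := mul_le_mul_of_nonneg_left h1 ht0.le
        _ = t := mul_one t
    set S' : Set (EuclideanSpace ℝ (Fin d)) := {y | y ∈ ball x r ∧ t ≤ deltaD D y} with hSinf
    set S : ℕ → Set (EuclideanSpace ℝ (Fin d)) := fun k =>
      {y | y ∈ ball x r ∧ u (k+1) ≤ deltaD D y ∧ deltaD D y < u k} with hS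
    have hδcont : Continuous (fun y : EuclideanSpace ℝ (Fin d) => deltaD D y) :=
      continuous_infDist_pt _
    have hmeas' : MeasurableSet S' :=
      measurableSet_ball.inter (isClosed_le continuous_const hδcont).measurableSet
    have hmeasS : ∀ k, MeasurableSet (S k) := fun k =>
      measurableSet_ball.inter
        ((isClosed_le continuous_const hδcont).measurableSet.inter
          (measurableSet_lt hδcont.measurable measurable_const))
    have hcov : D ∩ ball x r ⊆ S' ∪ ⋃ k, S k := by
      rintro y ⟨hyD, hyB⟩
      rcases le_or_gt t (deltaD D y) with hge | hlt
      · exact Or.inl ⟨hyB, hge⟩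
      · have hδy0 : 0 < deltaD D y := deltaD_pos hDopen hfr hyD
        have hex : ∃ n : ℕ, u n ≤ deltaD D y := by
          obtain ⟨n, hn⟩ := exists_pow_lt_of_lt_one (div_pos hδy0 ht0)
            (by norm_num : (2:ℝ)⁻¹ < 1)
          refine ⟨n, le_of_lt ?_⟩
          have := mul_lt_mul_of_pos_left hn ht0
          rwa [mul_div_cancel₀ _ ht0.ne'] at this
        have hn1 : u (Nat.find hex) ≤ deltaD D y := Nat.find_spec hex
        have hnpos : Nat.find hex ≠ 0 := by
          intro h0
          rw [h0] at hn1
          have : u 0 = t := by simp [hu]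
          rw [this] at hn1; linarith
        obtain ⟨k, hk⟩ := Nat.exists_eq_succ_of_ne_zero hnpos
        refine Or.inr (mem_iUnion.2 ⟨k, hyB, ?_, ?_⟩)
        · rw [← Nat.succ_eq_add_one, ← hk]; exact hn1
        · have hmin := Nat.find_min hex (m := k) (by omega)
          push_neg at hmin; exact hmin
    have hbound' : (∫⁻ y in S', ENNReal.ofReal ((truncMin A (deltaD D y)) ^ (-q))) ≤
        ENNReal.ofReal (t ^ (-q) * (r^(d:ℝ) * ν)) := by
      calc (∫⁻ y in S', ENNReal.ofReal ((truncMin A (deltaD D y)) ^ (-q)))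
          ≤ ∫⁻ _y in S', ENNReal.ofReal (t ^ (-q)) := by
            apply setLIntegral_mono' hmeas'
            intro y hy
            have h3 : t ≤ truncMin A (deltaD D y) := le_truncMin ht0.le hy.2 htA
            exact ENNReal.ofReal_le_ofReal
              (Real.rpow_le_rpow_of_nonpos ht0 h3 (neg_nonpos.2 hq0))
        _ = ENNReal.ofReal (t ^ (-q)) * volume S' := setLIntegral_const _ _
        _ ≤ ENNReal.ofReal (t ^ (-q)) * volume (ball x r) :=
            mul_le_mul_right (measure_mono fun y hy => hy.1) _
        _ = ENNReal.ofReal (t ^ (-q) * (r^(d:ℝ) * ν)) := by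
            rw [volBall hd x hr.le, ← Real.rpow_natCast r d,
              ← ENNReal.ofReal_mul (Real.rpow_nonneg ht0.le _)]
    have hc2 : ∀ (z : ℝ) (k : ℕ), (((2:ℝ)⁻¹)^k) ^ z = 2 ^ (-((k:ℕ):ℝ)*z) := by
      intro z k
      rw [← Real.rpow_natCast ((2:ℝ)⁻¹) k, ← Real.rpow_mul (by norm_num : (0:ℝ) ≤ 2⁻¹),
        Real.inv_rpow (by norm_num : (0:ℝ) ≤ 2), ← Real.rpow_neg (by norm_num : (0:ℝ) ≤ 2)]
      congr 1; ring
    have hboundk : ∀ k : ℕ, (∫⁻ y in S k, ENNReal.ofReal ((truncMin A (deltaD D y)) ^ (-q))) ≤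
        ENNReal.ofReal (2^q * C₂ * (r^(d:ℝ) * t^(-q))) * ENNReal.ofReal θ ^ k := by
      intro k
      have huk1A : ENNReal.ofReal (u (k+1)) ≤ A :=
        le_trans (ENNReal.ofReal_le_ofReal (hut _)) htA
      have step1 : (∫⁻ y in S k, ENNReal.ofReal ((truncMin A (deltaD D y)) ^ (-q))) ≤
          ENNReal.ofReal ((u (k+1)) ^ (-q)) * volume (S k) := by
        calc (∫⁻ y in S k, ENNReal.ofReal ((truncMin A (deltaD D y)) ^ (-q)))
            ≤ ∫⁻ _y in S k, ENNReal.ofReal ((u (k+1)) ^ (-q)) := by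
              apply setLIntegral_mono' (hmeasS k)
              intro y hy
              have h3 : u (k+1) ≤ truncMin A (deltaD D y) :=
                le_truncMin (hu0 _).le hy.2.1 huk1A
              exact ENNReal.ofReal_le_ofReal
                (Real.rpow_le_rpow_of_nonpos (hu0 (k+1)) h3 (neg_nonpos.2 hq0))
          _ = ENNReal.ofReal ((u (k+1)) ^ (-q)) * volume (S k) := setLIntegral_const _ _
      have step2 : volume (S k) ≤ ENNReal.ofReal (C₂ * ((u k / r)^q' * r^(d:ℝ))) := by
        refine le_trans (measure_mono ?_) (hB x r (u k) hr hc (hu0 k) ((hut k).trans htr))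
        exact fun y hy => ⟨hy.1, hy.2.2⟩
      refine le_trans (step1.trans (mul_le_mul_right step2 _)) ?_
      rw [← ENNReal.ofReal_mul (Real.rpow_nonneg (hu0 _).le _),
        ← ENNReal.ofReal_pow hθ0.le, ← ENNReal.ofReal_mul (by positivity)]
      apply ENNReal.ofReal_le_ofReal
      have eA : (u (k+1)) ^ (-q) = t^(-q) * ((2:ℝ)^q * 2^((k:ℝ)*q)) := by
        have h5 : u (k+1) = t * ((2:ℝ)⁻¹)^(k+1) := rfl
        rw [h5, Real.mul_rpow ht0.le (by positivity), hc2 (-q) (k+1), ← Real.rpow_add two_pos]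
        congr 1
        push_cast; ring
      have eB : (u k / r) ^ q' ≤ 2^(-(k:ℝ)*q') := by
        have h5 : u k / r = (t/r) * ((2:ℝ)⁻¹)^k := by
          show (t * ((2:ℝ)⁻¹)^k) / r = _
          ring
        rw [h5, Real.mul_rpow (by positivity) (by positivity), hc2 q' k]
        have htr1 : (t/r)^q' ≤ 1 :=
          Real.rpow_le_one (by positivity) (div_le_one_of_le₀ htr hr.le) hq'0.le
        exact mul_le_of_le_one_left (Real.rpow_nonneg (by positivity) _) htr1
      have eC : θ^k = (2:ℝ)^((k:ℝ)*(q-q')) := by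
        rw [hθdef, ← Real.rpow_natCast ((2:ℝ)^(q-q')) k,
          ← Real.rpow_mul (by norm_num : (0:ℝ) ≤ 2)]
        congr 1; ring
      calc (u (k+1))^(-q) * (C₂ * ((u k / r)^q' * r^(d:ℝ)))
          ≤ (t^(-q) * ((2:ℝ)^q * 2^((k:ℝ)*q))) * (C₂ * (2^(-(k:ℝ)*q') * r^(d:ℝ))) := by
            rw [eA]
            apply mul_le_mul_of_nonneg_left _ (by positivity)
            apply mul_le_mul_of_nonneg_left _ hC₂0.le
            exact mul_le_mul_of_nonneg_right eB (Real.rpow_nonneg hr.le _)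
        _ = 2^q * C₂ * (r^(d:ℝ) * t^(-q)) * θ^k := by
            rw [eC]
            have hmerge : (2:ℝ)^((k:ℝ)*q) * 2^(-(k:ℝ)*q') = 2^((k:ℝ)*(q-q')) := by
              rw [← Real.rpow_add two_pos]
              congr 1; ring
            linear_combination (t^(-q) * C₂ * r^(d:ℝ) * 2^q) * hmerge
    have hsum : (∑' k, ∫⁻ y in S k, ENNReal.ofReal ((truncMin A (deltaD D y)) ^ (-q))) ≤
        ENNReal.ofReal (2^q * C₂ * (r^(d:ℝ) * t^(-q))) * (1 - ENNReal.ofReal θ)⁻¹ := by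
      calc (∑' k, ∫⁻ y in S k, ENNReal.ofReal ((truncMin A (deltaD D y)) ^ (-q)))
          ≤ ∑' k, ENNReal.ofReal (2^q * C₂ * (r^(d:ℝ) * t^(-q))) * ENNReal.ofReal θ ^ k :=
            ENNReal.tsum_le_tsum hboundk
        _ = ENNReal.ofReal (2^q * C₂ * (r^(d:ℝ) * t^(-q))) * ∑' k, ENNReal.ofReal θ ^ k :=
            ENNReal.tsum_mul_left
        _ = _ := by rw [ENNReal.tsum_geometric]
    have hgeo : (1 - ENNReal.ofReal θ)⁻¹ = ENNReal.ofReal ((1-θ)⁻¹) := by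
      have h5 : (1 : ℝ≥0∞) - ENNReal.ofReal θ = ENNReal.ofReal (1 - θ) := by
        rw [ENNReal.ofReal_sub 1 hθ0.le, ENNReal.ofReal_one]
      rw [h5, ← ENNReal.ofReal_inv_of_pos h1θ]
    calc (∫⁻ y in D ∩ ball x r, ENNReal.ofReal ((truncMin A (deltaD D y)) ^ (-q)))
        ≤ ∫⁻ y in S' ∪ ⋃ k, S k, ENNReal.ofReal ((truncMin A (deltaD D y)) ^ (-q)) :=
          lintegral_mono_set hcov
      _ ≤ (∫⁻ y in S', ENNReal.ofReal ((truncMin A (deltaD D y)) ^ (-q))) +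
            ∫⁻ y in ⋃ k, S k, ENNReal.ofReal ((truncMin A (deltaD D y)) ^ (-q)) :=
          lintegral_union_le _ _ _
      _ ≤ (∫⁻ y in S', ENNReal.ofReal ((truncMin A (deltaD D y)) ^ (-q))) +
            ∑' k, ∫⁻ y in S k, ENNReal.ofReal ((truncMin A (deltaD D y)) ^ (-q)) :=
          add_le_add_right (lintegral_iUnion_le _ _) _
      _ ≤ ENNReal.ofReal (t ^ (-q) * (r^(d:ℝ) * ν)) +
            ENNReal.ofReal (2^q * C₂ * (r^(d:ℝ) * t^(-q)) * (1-θ)⁻¹) := by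
          refine add_le_add hbound' (hsum.trans ?_)
          rw [hgeo, ← ENNReal.ofReal_mul (by positivity)]
      _ ≤ ENNReal.ofReal (K * r ^ (d:ℝ) * T ^ (-q)) := by
          rw [← ENNReal.ofReal_add (by positivity) (by positivity)]
          apply ENNReal.ofReal_le_ofReal
          have hLHSeq : t^(-q) * (r^(d:ℝ) * ν) + 2^q * C₂ * (r^(d:ℝ)*t^(-q)) * (1-θ)⁻¹
              = (ν + 2^q * C₂ * (1-θ)⁻¹) * (r^(d:ℝ) * t^(-q)) := by ring
          rw [hLHSeq]
          have hcoef : (0:ℝ) ≤ ν + 2^q * C₂ * (1-θ)⁻¹ := by linarith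
          have h1 : r^(d:ℝ) * t^(-q) ≤ r^(d:ℝ) * (2^q * T^(-q)) :=
            mul_le_mul_of_nonneg_left htT (Real.rpow_nonneg hr.le _)
          calc (ν + 2^q * C₂ * (1-θ)⁻¹) * (r^(d:ℝ) * t^(-q))
              ≤ (ν + 2^q * C₂ * (1-θ)⁻¹) * (r^(d:ℝ) * (2^q * T^(-q))) :=
                mul_le_mul_of_nonneg_left h1 hcoef
            _ = K * r^(d:ℝ) * T^(-q) := by rw [hKdef]; ring
end

section
/- Assume 2β₁ ≤ d + α. Then there exists C > 0 such that (i) for all a, r > 0, sup_{R ≥ r} R^{−d−α} Φ((R ∧ A₀)²/a) ≤ C r^{−d−α} Φ((r ∧ A₀)²/a); and (ii) for all r > 0, all x ∈ D and all y ∈ D ∖ B(x,r), J(x,y) ≤ C r^{−d−α} Φ((r ∧ A₀)²/((δ_D(x) ∧ A₀)(δ_D(y) ∧ A₀))). -/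
open MeasureTheory Metric Set ENNReal Filter

lemma tm_pos {A : ℝ≥0∞} (hA : 0 < A) {r : ℝ} (hr : 0 < r) : 0 < truncMin A r := by
  apply ENNReal.toReal_pos
  · exact (lt_min (ENNReal.ofReal_pos.mpr hr) hA).ne'
  · exact ne_top_of_le_ne_top ENNReal.ofReal_ne_top (min_le_left _ _)

lemma tm_scale (A : ℝ≥0∞) {r R : ℝ} (hr : 0 < r) (hrR : r ≤ R) :
    truncMin A R ≤ (R / r) * truncMin A r := by
  have hR : 0 < R := hr.trans_le hrR
  have ht : 1 ≤ R / r := (one_le_div hr).mpr hrR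
  by_cases h : ENNReal.ofReal r ≤ A
  · by_cases h2 : ENNReal.ofReal R ≤ A
    · rw [truncMin, truncMin, min_eq_left h, min_eq_left h2,
        ENNReal.toReal_ofReal hr.le, ENNReal.toReal_ofReal hR.le,
        div_mul_cancel₀ _ hr.ne']
    · push_neg at h2
      rw [truncMin, truncMin, min_eq_left h, min_eq_right h2.le,
        ENNReal.toReal_ofReal hr.le]
      have : A.toReal ≤ R := by
        rw [← ENNReal.toReal_ofReal hR.le]
        exact ENNReal.toReal_mono ENNReal.ofReal_ne_top h2.le
      calc A.toReal ≤ R := this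
        _ = (R / r) * r := (div_mul_cancel₀ _ hr.ne').symm
  · push_neg at h
    have h2 : A ≤ ENNReal.ofReal R := h.le.trans (ENNReal.ofReal_le_ofReal hrR)
    rw [truncMin, truncMin, min_eq_right h.le, min_eq_right h2]
    exact le_mul_of_one_le_left ENNReal.toReal_nonneg ht

theorem stmt5 {d : ℕ} (hd : 1 ≤ d) (D : Set (EuclideanSpace ℝ (Fin d)))
    (hDopen : IsOpen D) (hDne : D.Nonempty) (hfr : (frontier D).Nonempty)
    (Φ : ℝ → ℝ) (β₁ C_Φ : ℝ) (hβ₁ : 0 ≤ β₁) (hC_Φ : 1 ≤ C_Φ)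
    (hΦ0 : Φ 0 = 1) (hΦ1 : ∀ r : ℝ, 0 ≤ r → 1 ≤ Φ r)
    (hΦmono : MonotoneOn Φ (Set.Ici 0)) (hΦcont : ContinuousOn Φ (Set.Ici 0))
    (hΦscale : ∀ s r : ℝ, 0 < s → s ≤ r → Φ r ≤ C_Φ * (r / s) ^ β₁ * Φ s)
    (α : ℝ) (hα0 : 0 < α) (hα2 : α < 2) (A₀ : ℝ≥0∞) (hA₀ : 0 < A₀)
    (J : EuclideanSpace ℝ (Fin d) → EuclideanSpace ℝ (Fin d) → ℝ)
    (C₁ : ℝ) (hC₁ : 1 < C₁)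
    (hJnn : ∀ x y, 0 ≤ J x y)
    (hJmeas : Measurable (Function.uncurry J))
    (hJsym : ∀ x ∈ D, ∀ y ∈ D, J x y = J y x)
    (hJbound : ∀ x ∈ D, ∀ y ∈ D, x ≠ y →
      C₁⁻¹ * (dist x y ^ (-((d : ℝ) + α)) *
          Φ ((truncMin A₀ (dist x y)) ^ 2 /
            (truncMin A₀ (deltaD D x) * truncMin A₀ (deltaD D y)))) ≤ J x y ∧
      J x y ≤ C₁ * (dist x y ^ (-((d : ℝ) + α)) *
          Φ ((truncMin A₀ (dist x y)) ^ 2 /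
            (truncMin A₀ (deltaD D x) * truncMin A₀ (deltaD D y)))))
    (hβd : 2 * β₁ ≤ (d : ℝ) + α) :
    ∃ C : ℝ, 0 < C ∧
      (∀ a r R : ℝ, 0 < a → 0 < r → r ≤ R →
        R ^ (-((d : ℝ) + α)) * Φ ((truncMin A₀ R) ^ 2 / a) ≤
          C * (r ^ (-((d : ℝ) + α)) * Φ ((truncMin A₀ r) ^ 2 / a))) ∧
      (∀ r : ℝ, 0 < r → ∀ x ∈ D, ∀ y ∈ D, r ≤ dist x y →
        J x y ≤ C * (r ^ (-((d : ℝ) + α)) *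
          Φ ((truncMin A₀ r) ^ 2 /
            (truncMin A₀ (deltaD D x) * truncMin A₀ (deltaD D y))))) := by
  have hC₁0 : 0 < C₁ := lt_trans one_pos hC₁
  have hCΦ0 : 0 < C_Φ := lt_of_lt_of_le one_pos hC_Φ
  set e : ℝ := (d : ℝ) + α with he
  have key : ∀ a r R : ℝ, 0 < a → 0 < r → r ≤ R →
      R ^ (-e) * Φ ((truncMin A₀ R) ^ 2 / a) ≤
        C_Φ * (r ^ (-e) * Φ ((truncMin A₀ r) ^ 2 / a)) := by
    intro a r R ha hr hrR
    have hR : 0 < R := hr.trans_le hrR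
    have htmr : 0 < truncMin A₀ r := tm_pos hA₀ hr
    have htmR : 0 < truncMin A₀ R := tm_pos hA₀ hR
    set t : ℝ := R / r with ht_def
    have ht1 : 1 ≤ t := (one_le_div hr).mpr hrR
    have ht0 : 0 < t := lt_of_lt_of_le one_pos ht1
    set s : ℝ := (truncMin A₀ r) ^ 2 / a with hs_def
    have hs : 0 < s := by positivity
    have h1 : truncMin A₀ R ≤ t * truncMin A₀ r := tm_scale A₀ hr hrR
    have hsq : (truncMin A₀ R) ^ 2 ≤ t ^ 2 * (truncMin A₀ r) ^ 2 := by nlinarith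
    have hle : (truncMin A₀ R) ^ 2 / a ≤ t ^ 2 * s := by
      rw [hs_def, ← mul_div_assoc]
      exact div_le_div_of_nonneg_right hsq ha.le |>.trans_eq rfl
    have hΦa : Φ ((truncMin A₀ R) ^ 2 / a) ≤ Φ (t ^ 2 * s) :=
      hΦmono (Set.mem_Ici.mpr (by positivity)) (Set.mem_Ici.mpr (by positivity)) hle
    have hΦb : Φ (t ^ 2 * s) ≤ C_Φ * t ^ (2 * β₁) * Φ s := by
      have h2 := hΦscale s (t ^ 2 * s) hs
        (le_mul_of_one_le_left hs.le (one_le_pow₀ ht1))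
      have h3 : t ^ 2 * s / s = t ^ 2 := mul_div_cancel_right₀ _ hs.ne'
      rw [h3] at h2
      have h4 : ((t : ℝ) ^ 2) ^ β₁ = t ^ (2 * β₁) := by
        rw [← Real.rpow_natCast t 2, ← Real.rpow_mul ht0.le]
        norm_num
      rwa [h4] at h2
    have hΦnn : 0 ≤ Φ s := le_trans zero_le_one (hΦ1 s hs.le)
    have hpow : R ^ (-e) * t ^ (2 * β₁) ≤ r ^ (-e) := by
      have hRe : R = t * r := (div_mul_cancel₀ _ hr.ne').symm
      have hmul : R ^ (-e) = t ^ (-e) * r ^ (-e) := by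
        rw [hRe, Real.mul_rpow ht0.le hr.le]
      rw [hmul]
      have ht_le : t ^ (-e) * t ^ (2 * β₁) ≤ 1 := by
        rw [← Real.rpow_add ht0]
        exact Real.rpow_le_one_of_one_le_of_nonpos ht1 (by rw [he]; linarith)
      calc t ^ (-e) * r ^ (-e) * t ^ (2 * β₁)
          = (t ^ (-e) * t ^ (2 * β₁)) * r ^ (-e) := by ring
        _ ≤ 1 * r ^ (-e) :=
            mul_le_mul_of_nonneg_right ht_le (Real.rpow_nonneg hr.le _)
        _ = r ^ (-e) := one_mul _
    have hRnn : 0 ≤ R ^ (-e) := Real.rpow_nonneg hR.le _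
    calc R ^ (-e) * Φ ((truncMin A₀ R) ^ 2 / a)
        ≤ R ^ (-e) * (C_Φ * t ^ (2 * β₁) * Φ s) :=
          mul_le_mul_of_nonneg_left (hΦa.trans hΦb) hRnn
      _ = C_Φ * ((R ^ (-e) * t ^ (2 * β₁)) * Φ s) := by ring
      _ ≤ C_Φ * (r ^ (-e) * Φ s) := by
          apply mul_le_mul_of_nonneg_left _ hCΦ0.le
          exact mul_le_mul_of_nonneg_right hpow hΦnn
  refine ⟨C₁ * C_Φ, mul_pos hC₁0 hCΦ0, ?_, ?_⟩
  · intro a r R ha hr hrR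
    have hX : 0 ≤ r ^ (-e) * Φ ((truncMin A₀ r) ^ 2 / a) := by
      have := hΦ1 ((truncMin A₀ r) ^ 2 / a) (by positivity)
      have := Real.rpow_nonneg hr.le (-e)
      nlinarith
    calc R ^ (-e) * Φ ((truncMin A₀ R) ^ 2 / a)
        ≤ C_Φ * (r ^ (-e) * Φ ((truncMin A₀ r) ^ 2 / a)) := key a r R ha hr hrR
      _ ≤ (C₁ * C_Φ) * (r ^ (-e) * Φ ((truncMin A₀ r) ^ 2 / a)) := by
          apply mul_le_mul_of_nonneg_right _ hX
          nlinarith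
  · intro r hr x hx y hy hdist
    have hxfr : x ∉ frontier D := by
      rw [hDopen.frontier_eq]; exact fun h => h.2 hx
    have hyfr : y ∉ frontier D := by
      rw [hDopen.frontier_eq]; exact fun h => h.2 hy
    have hdx : 0 < deltaD D x :=
      (isClosed_frontier.notMem_iff_infDist_pos hfr).mp hxfr
    have hdy : 0 < deltaD D y :=
      (isClosed_frontier.notMem_iff_infDist_pos hfr).mp hyfr
    have ha : 0 < truncMin A₀ (deltaD D x) * truncMin A₀ (deltaD D y) :=
      mul_pos (tm_pos hA₀ hdx) (tm_pos hA₀ hdy)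
    have hxy : x ≠ y := by
      intro h; rw [h, dist_self] at hdist; linarith
    have hJ := (hJbound x hx y hy hxy).2
    calc J x y ≤ C₁ * (dist x y ^ (-e) *
          Φ ((truncMin A₀ (dist x y)) ^ 2 /
            (truncMin A₀ (deltaD D x) * truncMin A₀ (deltaD D y)))) := hJ
      _ ≤ C₁ * (C_Φ * (r ^ (-e) *
          Φ ((truncMin A₀ r) ^ 2 /
            (truncMin A₀ (deltaD D x) * truncMin A₀ (deltaD D y))))) :=
          mul_le_mul_of_nonneg_left (key _ r (dist x y) ha hr hdist) hC₁0.le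
      _ = (C₁ * C_Φ) * (r ^ (-e) *
          Φ ((truncMin A₀ r) ^ 2 /
            (truncMin A₀ (deltaD D x) * truncMin A₀ (deltaD D y)))) := by ring
end
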